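/- arXiv:1407.5394 — 2 statements merged into one kernel-verified Lean document; each statement's English description precedes it below -/
import Mathlib

section
/- Let (q_n)_{n≥1} be an enumeration of ℚ ∩ [0,1]. For each n define f_n : [0,1] → [−1,1] by f_n(x) = sin(1/(x − q_n)) for x ≠ q_n and f_n(q_n) = 0, and let f(x) = Σ_{n=1}^∞ 2^{−n} f_n(x). Then the graph E = {(x, f(x)) : x ∈ [0,1]} is a connected subset of [0,1] × [−1,1]. -/
/-!
Away from the countable set `C = range q` the series converges uniformly near each point, so `f`
is continuous there. Near `q m`, `f` is `2⁻¹ ^ (m + 1) * sin (1 / (x - q m))` plus a function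
continuous at `q m`; the zeros of this sine accumulate at `q m` from both sides, so
`(q m, f (q m))` is a limit of points of the graph from the left and from the right.

If open sets `U`, `V` split the graph, their traces `A`, `B` on `[0, 1]` partition it and
`closure A ∩ closure B` is a nonempty closed set, contained in `C` by continuity. Being
countable, it has an isolated point `s`, say `s ∈ A`. Some one-sided interval at `s` meets `B`,
and contains no point of `closure A ∩ closure B`, so by connectedness it lies in `B`. This
contradicts the one-sided approximation of `(s, f s) ∈ U` by the graph.
-/

open Set Filter Topology

lemma IsPreconnected.subset_of_disjoint_closure_inter {X : Type*} [TopologicalSpace X]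
    {S A B : Set X} (hS : IsPreconnected S) (hcov : S ⊆ A ∪ B)
    (hsep : Disjoint S (closure A ∩ closure B)) {b : X} (hbS : b ∈ S) (hbB : b ∈ B) :
    S ⊆ B := by
  intro x hxS
  by_contra hxB
  have hxA : x ∈ A := (hcov hxS).resolve_right hxB
  obtain ⟨y, hyS, hy⟩ := isPreconnected_closed_iff.1 hS _ _ isClosed_closure isClosed_closure
    (hcov.trans (union_subset_union subset_closure subset_closure))
    ⟨x, hxS, subset_closure hxA⟩ ⟨b, hbS, subset_closure hbB⟩
  exact hsep.notMem_of_mem_left hyS hy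

section OrderTopology

variable {α : Type*} [ConditionallyCompleteLinearOrder α] [DenselyOrdered α]
  [TopologicalSpace α] [OrderTopology α]

lemma eventually_nhdsGT_mem_of_frequently [NoMaxOrder α] {I A B : Set α} (hI : I.OrdConnected)
    (hcov : I ⊆ A ∪ B) (hB : B ⊆ I) {s : α} (hs : s ∈ I)
    (hiso : ∀ᶠ y in 𝓝[>] s, y ∉ closure A ∩ closure B) (hfreq : ∃ᶠ y in 𝓝[>] s, y ∈ B) :
    ∀ᶠ y in 𝓝[>] s, y ∈ B := by
  obtain ⟨t, hst, ht⟩ := mem_nhdsGT_iff_exists_Ioo_subset.1 hiso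
  obtain ⟨b, hbB, hsb, hbt⟩ := (hfreq.and_eventually (Ioo_mem_nhdsGT hst)).exists
  have hsub : Ioc s b ⊆ B :=
    isPreconnected_Ioc.subset_of_disjoint_closure_inter
      ((Ioc_subset_Icc_self.trans (hI.out hs (hB hbB))).trans hcov)
      (disjoint_left.2 fun y hy => ht ⟨hy.1, hy.2.trans_lt hbt⟩) ⟨hsb, le_rfl⟩ hbB
  exact mem_of_superset (Ioo_mem_nhdsGT hsb) (Ioo_subset_Ioc_self.trans hsub)

lemma eventually_nhdsLT_mem_of_frequently [NoMinOrder α] {I A B : Set α} (hI : I.OrdConnected)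
    (hcov : I ⊆ A ∪ B) (hB : B ⊆ I) {s : α} (hs : s ∈ I)
    (hiso : ∀ᶠ y in 𝓝[<] s, y ∉ closure A ∩ closure B) (hfreq : ∃ᶠ y in 𝓝[<] s, y ∈ B) :
    ∀ᶠ y in 𝓝[<] s, y ∈ B :=
  eventually_nhdsGT_mem_of_frequently (α := αᵒᵈ) hI.dual hcov hB hs hiso hfreq

lemma notMem_closure_of_frequently_notMem [NoMinOrder α] [NoMaxOrder α] {I A B : Set α}
    (hI : I.OrdConnected) (hcov : I ⊆ A ∪ B) (hB : B ⊆ I) {s : α} (hs : s ∈ I) (hsB : s ∉ B)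
    (hiso : ∀ᶠ y in 𝓝[≠] s, y ∉ closure A ∩ closure B)
    (hlt : ∃ᶠ y in 𝓝[<] s, y ∉ B) (hgt : ∃ᶠ y in 𝓝[>] s, y ∉ B) :
    s ∉ closure B := by
  intro hsB'
  have hfreq : ∃ᶠ y in 𝓝[≠] s, y ∈ B := by
    rw [← accPt_iff_frequently_nhdsNE, accPt_iff_frequently]
    exact (mem_closure_iff_frequently.1 hsB').mono fun y hy => ⟨ne_of_mem_of_not_mem hy hsB, hy⟩
  rw [← nhdsLT_sup_nhdsGT, frequently_sup] at hfreq
  rcases hfreq with hfreq | hfreq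
  · exact hlt.and_eventually (eventually_nhdsLT_mem_of_frequently hI hcov hB hs
      (hiso.filter_mono (nhdsLT_le_nhdsNE s)) hfreq) |>.exists.elim fun _ h => h.1 h.2
  · exact hgt.and_eventually (eventually_nhdsGT_mem_of_frequently hI hcov hB hs
      (hiso.filter_mono (nhdsGT_le_nhdsNE s)) hfreq) |>.exists.elim fun _ h => h.1 h.2

end OrderTopology

lemma IsClosed.exists_eventually_nhdsNE_notMem_of_countable {X : Type*} [MetricSpace X]
    [CompleteSpace X] {F : Set X} (hF : IsClosed F) (hc : F.Countable) (hne : F.Nonempty) :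
    ∃ x ∈ F, ∀ᶠ y in 𝓝[≠] x, y ∉ F := by
  by_contra! h
  obtain ⟨g, hg, -, hinj⟩ := Perfect.exists_nat_bool_injection
    ⟨hF, fun x hx => accPt_iff_frequently_nhdsNE.2 (h x hx)⟩ hne
  have hunc : Cardinal.aleph0 < Cardinal.mk (ℕ → Bool) := by
    simpa using Cardinal.aleph0_lt_continuum
  exact hunc.not_ge <| Cardinal.mk_le_aleph0_iff.2 <| countable_univ_iff.1 <|
    (mapsTo_univ_iff.2 fun z => hg (mem_range_self z)).countable_of_injOn hinj.injOn hc

theorem eq_empty_or_eq_empty_of_partition_Icc {a b : ℝ} {A B C : Set ℝ}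
    (hC : C.Countable) (hAB : A ∪ B = Icc a b) (hdisj : Disjoint A B)
    (hA : ∀ x ∈ A, x ∉ C → ∀ᶠ y in 𝓝 x, y ∉ B) (hB : ∀ x ∈ B, x ∉ C → ∀ᶠ y in 𝓝 x, y ∉ A)
    (hA' : ∀ x ∈ A, x ∈ C → (∃ᶠ y in 𝓝[<] x, y ∉ B) ∧ ∃ᶠ y in 𝓝[>] x, y ∉ B)
    (hB' : ∀ x ∈ B, x ∈ C → (∃ᶠ y in 𝓝[<] x, y ∉ A) ∧ ∃ᶠ y in 𝓝[>] x, y ∉ A) :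
    A = ∅ ∨ B = ∅ := by
  simp only [← not_nonempty_iff_eq_empty, ← not_and_or]
  rintro ⟨⟨x, hxA⟩, y, hyB⟩
  have hAI : A ⊆ Icc a b := hAB ▸ subset_union_left
  have hBI : B ⊆ Icc a b := hAB ▸ subset_union_right
  have hcov : Icc a b ⊆ A ∪ B := hAB.ge
  have hFI : closure A ∩ closure B ⊆ Icc a b :=
    inter_subset_left.trans (closure_minimal hAI isClosed_Icc)
  have hFC : closure A ∩ closure B ⊆ C := fun s hs => by
    by_contra hsC
    rcases hcov (hFI hs) with hsA | hsB
    exacts [mem_closure_iff_frequently.1 hs.2 (hA s hsA hsC),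
      mem_closure_iff_frequently.1 hs.1 (hB s hsB hsC)]
  obtain ⟨s₀, -, hs₀⟩ := isPreconnected_closed_iff.1 isPreconnected_Icc _ _ isClosed_closure
    isClosed_closure (hcov.trans (union_subset_union subset_closure subset_closure))
    ⟨x, hAI hxA, subset_closure hxA⟩ ⟨y, hBI hyB, subset_closure hyB⟩
  obtain ⟨s, hs, hiso⟩ := (isClosed_closure.inter isClosed_closure
    ).exists_eventually_nhdsNE_notMem_of_countable (hC.mono hFC) ⟨s₀, hs₀⟩
  rcases hcov (hFI hs) with hsA | hsB
  · exact notMem_closure_of_frequently_notMem ordConnected_Icc hcov hBI (hFI hs)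
      (hdisj.notMem_of_mem_left hsA) hiso (hA' s hsA (hFC hs)).1 (hA' s hsA (hFC hs)).2 hs.2
  · rw [inter_comm] at hiso
    exact notMem_closure_of_frequently_notMem ordConnected_Icc (union_comm A B ▸ hcov) hAI
      (hFI hs) (hdisj.notMem_of_mem_right hsB) hiso (hB' s hsB (hFC hs)).1
      (hB' s hsB (hFC hs)).2 hs.1

theorem isPreconnected_graph_Icc_of_countable {Y : Type*} [TopologicalSpace Y] {f : ℝ → Y}
    {a b : ℝ} {C : Set ℝ} (hC : C.Countable) (hcont : ∀ x ∈ Icc a b, x ∉ C → ContinuousAt f x)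
    (hlt : ∀ x ∈ Icc a b, x ∈ C → MapClusterPt (x, f x) (𝓝[<] x) fun y => (y, f y))
    (hgt : ∀ x ∈ Icc a b, x ∈ C → MapClusterPt (x, f x) (𝓝[>] x) fun y => (y, f y)) :
    IsPreconnected ((fun x => (x, f x)) '' Icc a b) := by
  rintro U V hU hV hcov ⟨_, ⟨u, hu, rfl⟩, huU⟩ ⟨_, ⟨v, hv, rfl⟩, hvV⟩
  by_contra hUV
  set γ : ℝ → ℝ × Y := fun x => (x, f x)
  set A := Icc a b ∩ γ ⁻¹' U
  set B := Icc a b ∩ γ ⁻¹' V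
  have hUB : ∀ y, γ y ∈ U → y ∉ B := fun y hyU hyB =>
    hUV ⟨γ y, mem_image_of_mem γ hyB.1, hyU, hyB.2⟩
  have hVA : ∀ y, γ y ∈ V → y ∉ A := fun y hyV hyA => hUB y hyA.2 ⟨hyA.1, hyV⟩
  have hγ : ∀ x ∈ Icc a b, x ∉ C → ContinuousAt γ x := fun x hx hxC =>
    continuousAt_id.prodMk (hcont x hx hxC)
  have hAB : A ∪ B = Icc a b := by
    refine (union_subset inter_subset_left inter_subset_left).antisymm fun x hx => ?_
    exact (hcov (mem_image_of_mem γ hx)).imp (⟨hx, ·⟩) (⟨hx, ·⟩)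
  rcases eq_empty_or_eq_empty_of_partition_Icc hC hAB
    (disjoint_left.2 fun x hxA => hUB x hxA.2)
    (fun x hx hxC => ((hγ x hx.1 hxC).eventually (hU.mem_nhds hx.2)).mono hUB)
    (fun x hx hxC => ((hγ x hx.1 hxC).eventually (hV.mem_nhds hx.2)).mono hVA)
    (fun x hx hxC => ⟨((hlt x hx.1 hxC).frequently (hU.mem_nhds hx.2)).mono hUB,
      ((hgt x hx.1 hxC).frequently (hU.mem_nhds hx.2)).mono hUB⟩)
    (fun x hx hxC => ⟨((hlt x hx.1 hxC).frequently (hV.mem_nhds hx.2)).mono hVA,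
      ((hgt x hx.1 hxC).frequently (hV.mem_nhds hx.2)).mono hVA⟩) with h | h
  exacts [h.subset ⟨hu, huU⟩, h.subset ⟨hv, hvV⟩]

theorem continuousAt_tsum {α β F : Type*} [TopologicalSpace β] [NormedAddCommGroup F]
    [CompleteSpace F] {f : α → β → F} {u : α → ℝ} {x : β} (hf : ∀ n, ContinuousAt (f n) x)
    (hu : Summable u) (hfu : ∀ n y, ‖f n y‖ ≤ u n) :
    ContinuousAt (fun y => ∑' n, f n y) x := by
  refine continuousAt_of_locally_uniform_approx_of_continuousAt fun v hv => ?_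
  obtain ⟨t, ht⟩ := (tendstoUniformly_tsum hu hfu v hv).exists
  exact ⟨univ, univ_mem, fun y => ∑ n ∈ t, f n y, tendsto_finsetSum _ fun n _ => hf n,
    fun y _ => ht y⟩

lemma frequently_nhdsGT_sin_one_div_sub_eq_zero (c : ℝ) :
    ∃ᶠ x in 𝓝[>] c, Real.sin (1 / (x - c)) = 0 := by
  have hk : Tendsto (fun k : ℕ => c + ((k : ℝ) * Real.pi)⁻¹) atTop (𝓝[>] c) := by
    simpa [Function.comp_def] using Tendsto.comp (map_add_left_nhdsGT (c := c) (a := 0)).le <|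
      tendsto_inv_atTop_nhdsGT_zero.comp <|
        tendsto_natCast_atTop_atTop.atTop_mul_const Real.pi_pos
  exact hk.frequently (Frequently.of_forall fun k => by simp [Real.sin_nat_mul_pi])

lemma frequently_nhdsLT_sin_one_div_sub_eq_zero (c : ℝ) :
    ∃ᶠ x in 𝓝[<] c, Real.sin (1 / (x - c)) = 0 := by
  have hk : Tendsto (fun k : ℕ => c + (-((k : ℝ) * Real.pi))⁻¹) atTop (𝓝[<] c) := by
    simpa [Function.comp_def] using Tendsto.comp (map_add_left_nhdsLT (c := c) (a := 0)).le <|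
      tendsto_inv_atBot_nhdsLT_zero.comp <| tendsto_neg_atTop_atBot.comp <|
        tendsto_natCast_atTop_atTop.atTop_mul_const Real.pi_pos
  exact hk.frequently (Frequently.of_forall fun k => by simp [Real.sin_nat_mul_pi])

lemma mapClusterPt_graph_of_frequently_eq {X Y : Type*} [TopologicalSpace X]
    [TopologicalSpace Y] {f g : X → Y} {x : X} {L : Filter X} (hL : L ≤ 𝓝 x)
    (hg : ContinuousAt g x) (hfx : f x = g x) (hfg : ∃ᶠ y in L, f y = g y) :
    MapClusterPt (x, f x) L fun y => (y, f y) := by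
  refine mapClusterPt_iff_frequently.2 fun W hW => ?_
  have hgW : ∀ᶠ y in L, (y, g y) ∈ W :=
    hL <| (continuousAt_id.prodMk hg).preimage_mem_nhds (by rwa [← hfx])
  exact (hfg.and_eventually hgW).mono fun y ⟨hfgy, hy⟩ => hfgy ▸ hy

section SumSinInv

variable {ι : Type*} {c q : ι → ℝ}

noncomputable def sumSinInv (c q : ι → ℝ) (x : ℝ) : ℝ :=
  ∑' n, c n * Real.sin (1 / (x - q n))

lemma norm_mul_sin_le (c x : ℝ) : ‖c * Real.sin x‖ ≤ |c| := by
  simpa [abs_mul] using mul_le_of_le_one_right (abs_nonneg c) (Real.abs_sin_le_one x)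

lemma abs_sumSinInv_le (hc : Summable c) (x : ℝ) : |sumSinInv c q x| ≤ ∑' n, |c n| :=
  tsum_of_norm_bounded hc.abs.hasSum fun _ => norm_mul_sin_le _ _

lemma continuousAt_sumSinInv (hc : Summable c) {x : ℝ} (hx : ∀ n, x = q n → c n = 0) :
    ContinuousAt (sumSinInv c q) x := by
  refine continuousAt_tsum (fun n => ?_) hc.abs fun _ _ => norm_mul_sin_le _ _
  by_cases hxn : x = q n
  · simp only [hx n hxn, zero_mul]
    exact continuousAt_const
  · have : x - q n ≠ 0 := sub_ne_zero.2 hxn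
    fun_prop (disch := assumption)

lemma sumSinInv_eq_add_update [DecidableEq ι] (hc : Summable c) (m : ι) (x : ℝ) :
    sumSinInv c q x =
      c m * Real.sin (1 / (x - q m)) + sumSinInv (Function.update c m 0) q x := by
  rw [sumSinInv, (hc.abs.of_norm_bounded fun _ => norm_mul_sin_le _ _).tsum_eq_add_tsum_ite m,
    sumSinInv]
  congr 1
  refine tsum_congr fun n => ?_
  by_cases h : n = m <;> simp [h]

lemma mapClusterPt_sumSinInv (hc : Summable c) (hq : Function.Injective q) (m : ι)
    {L : Filter ℝ} (hL : L ≤ 𝓝 (q m)) (hzero : ∃ᶠ x in L, Real.sin (1 / (x - q m)) = 0) :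
    MapClusterPt (q m, sumSinInv c q (q m)) L fun x => (x, sumSinInv c q x) := by
  classical
  have heq : ∀ x, Real.sin (1 / (x - q m)) = 0 →
      sumSinInv c q x = sumSinInv (Function.update c m 0) q x := fun x hx => by
    rw [sumSinInv_eq_add_update hc m, hx, mul_zero, zero_add]
  refine mapClusterPt_graph_of_frequently_eq hL
    (continuousAt_sumSinInv (hc.update m 0) fun _ hn => ?_) (heq _ (by simp)) (hzero.mono heq)
  obtain rfl := hq hn
  simp

theorem isPreconnected_graph_sumSinInv [Countable ι] (hc : Summable c)
    (hq : Function.Injective q) (a b : ℝ) :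
    IsPreconnected ((fun x => (x, sumSinInv c q x)) '' Icc a b) := by
  refine isPreconnected_graph_Icc_of_countable (countable_range q)
    (fun x _ hx => continuousAt_sumSinInv hc fun n hn => absurd ⟨n, hn.symm⟩ hx) ?_ ?_
  · rintro _ - ⟨m, rfl⟩
    exact mapClusterPt_sumSinInv hc hq m nhdsWithin_le_nhds
      (frequently_nhdsLT_sin_one_div_sub_eq_zero _)
  · rintro _ - ⟨m, rfl⟩
    exact mapClusterPt_sumSinInv hc hq m nhdsWithin_le_nhds
      (frequently_nhdsGT_sin_one_div_sub_eq_zero _)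

end SumSinInv

theorem graph_of_sum_of_sin_connected_general
    (q : ℕ → ℝ) (hq_inj : Function.Injective q)
    (f : ℝ → ℝ)
    (hf : ∀ x : ℝ, f x =
      ∑' n : ℕ, (1 / 2 : ℝ) ^ (n + 1) * (if x = q n then 0 else Real.sin (1 / (x - q n)))) :
    {p : ℝ × ℝ | p.1 ∈ Set.Icc (0 : ℝ) 1 ∧ p.2 = f p.1} ⊆
      Set.Icc (0 : ℝ) 1 ×ˢ Set.Icc (-1 : ℝ) 1 ∧
    IsConnected {p : ℝ × ℝ | p.1 ∈ Set.Icc (0 : ℝ) 1 ∧ p.2 = f p.1} := by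
  set c : ℕ → ℝ := fun n => (1 / 2 : ℝ) ^ (n + 1)
  have hc : Summable c := (summable_nat_add_iff 1).2 summable_geometric_two
  have hc1 : ∑' n, |c n| = 1 := by
    simp_rw [c, abs_pow, abs_of_pos (one_half_pos (α := ℝ)), pow_succ, tsum_mul_right,
      tsum_geometric_two]
    norm_num
  -- `1 / 0 = 0` in Lean, so the `if` only restates the value `sin (1 / 0) = 0`
  obtain rfl : f = sumSinInv c q := funext fun x => (hf x).trans <| tsum_congr fun n => by
    split_ifs with h
    · simp [h]
    · rfl
  have hgraph : {p : ℝ × ℝ | p.1 ∈ Icc (0 : ℝ) 1 ∧ p.2 = sumSinInv c q p.1} =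
      (fun x => (x, sumSinInv c q x)) '' Icc 0 1 := by
    ext ⟨x, y⟩
    simp [eq_comm]
  refine ⟨fun p ⟨hx, hp⟩ => ⟨hx, abs_le.1 (hp ▸ hc1 ▸ abs_sumSinInv_le hc p.1)⟩, ?_⟩
  rw [hgraph]
  exact ⟨(nonempty_Icc.2 zero_le_one).image _, isPreconnected_graph_sumSinInv hc hq_inj 0 1⟩

theorem graph_of_sum_of_sin_connected
    (q : ℕ → ℝ) (hq_inj : Function.Injective q)
    (hq_range : Set.range q = {x : ℝ | x ∈ Set.Icc (0 : ℝ) 1 ∧ ∃ p : ℚ, (p : ℝ) = x})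
    (f : ℝ → ℝ)
    (hf : ∀ x : ℝ, f x =
      ∑' n : ℕ, (1 / 2 : ℝ) ^ (n + 1) * (if x = q n then 0 else Real.sin (1 / (x - q n)))) :
    {p : ℝ × ℝ | p.1 ∈ Set.Icc (0 : ℝ) 1 ∧ p.2 = f p.1} ⊆
      Set.Icc (0 : ℝ) 1 ×ˢ Set.Icc (-1 : ℝ) 1 ∧
    IsConnected {p : ℝ × ℝ | p.1 ∈ Set.Icc (0 : ℝ) 1 ∧ p.2 = f p.1} :=
  graph_of_sum_of_sin_connected_general q hq_inj f hf
end

section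
/- Let (q_n)_{n≥1} be an enumeration of ℚ ∩ [0,1]. For each n define f_n : [0,1] → [−1,1] by f_n(x) = sin(1/(x − q_n)) for x ≠ q_n and f_n(q_n) = 0, and let f(x) = Σ_{n=1}^∞ 2^{−n} f_n(x). Let X = [0,1] × [−1,1] and E = {(x, f(x)) : x ∈ [0,1]}. Then E is an H₁-retract of X: there exists a function r : X → E with r(p) = p for all p ∈ E such that the preimage under r of every closed subset of E is a G_δ-set in X. -/
/-!
The retraction is `(x, y) ↦ (x, f x)`. Damping each term `sin (1 / (x - q n))` by the factor
`min 1 (m * |x - q n|)` makes it continuous, and the damped series converge pointwise to `f` as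
`m → ∞` by dominated convergence. So `x ↦ (x, f x)` is a pointwise limit of continuous maps into a
metric space, and preimages of closed sets under such a limit are `G_δ`.
-/

open Set Filter Topology Metric

theorem IsClosed.isGδ_preimage_of_tendsto {X Y : Type*} [TopologicalSpace X]
    [PseudoEMetricSpace Y] {g : ℕ → X → Y} {f : X → Y} (hg : ∀ m, Continuous (g m))
    (hlim : ∀ x, Tendsto (fun m => g m x) atTop (𝓝 (f x))) {F : Set Y} (hF : IsClosed F) :
    IsGδ (f ⁻¹' F) := by
  have hF_eq : ⋂ k : ℕ, cthickening (1 / ((k : ℝ) + 1)) F = F := by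
    rw [← biInter_range (f := fun k : ℕ => 1 / ((k : ℝ) + 1)) (g := fun δ => cthickening δ F),
      ← closure_eq_iInter_cthickening', hF.closure_eq]
    intro ε hε
    obtain ⟨k, hk⟩ := exists_nat_one_div_lt hε
    exact ⟨_, mem_range_self k, Nat.one_div_pos_of_nat, hk.le⟩
  have h_preimage : f ⁻¹' F =
      ⋂ k : ℕ, ⋂ N : ℕ, ⋃ m ≥ N, g m ⁻¹' thickening (1 / ((k : ℝ) + 1)) F := by
    ext x
    simp only [mem_preimage, mem_iInter, mem_iUnion, exists_prop, ← frequently_atTop]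
    constructor
    · intro hx k
      exact ((hlim x).eventually (isOpen_thickening.mem_nhds
        (self_subset_thickening Nat.one_div_pos_of_nat F hx))).frequently
    · intro hx
      rw [← hF_eq, mem_iInter]
      exact fun k => closure_thickening_subset_cthickening _ F
        (mem_closure_of_frequently_of_tendsto (hx k) (hlim x))
  rw [h_preimage]
  exact .iInter fun k => .iInter fun N => (isOpen_biUnion fun m _ =>
    isOpen_thickening.preimage (hg m)).isGδ

section DampedSeries

variable {φ : ℝ → ℝ} {C : ℝ}

theorem continuous_mul_min_one_mul_abs (hφ : ∀ t ≠ 0, ContinuousAt φ t) (hφC : ∀ t, |φ t| ≤ C)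
    (c : ℝ) : Continuous fun t => φ t * min 1 (c * |t|) := by
  rw [continuous_iff_continuousAt]
  intro t
  rcases eq_or_ne t 0 with rfl | ht
  · have h_damp : Tendsto (fun t : ℝ => min 1 (c * |t|)) (𝓝 0) (𝓝 0) := by
      simpa using (show Continuous fun t : ℝ => min 1 (c * |t|) by fun_prop).tendsto 0
    simpa [ContinuousAt] using
      isBoundedUnder_le_mul_tendsto_zero (f := φ) (isBoundedUnder_of ⟨C, hφC⟩) h_damp
  · exact (hφ t ht).mul (by fun_prop)

theorem abs_mul_min_one_mul_abs_le (hφC : ∀ t, |φ t| ≤ C) {c : ℝ} (hc : 0 ≤ c) (t : ℝ) :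
    |φ t * min 1 (c * |t|)| ≤ C := by
  have h_damp : |min 1 (c * |t|)| ≤ 1 :=
    abs_le.2 ⟨by linarith [le_min zero_le_one (by positivity : 0 ≤ c * |t|)], min_le_left _ _⟩
  calc |φ t * min 1 (c * |t|)| = |φ t| * |min 1 (c * |t|)| := abs_mul _ _
    _ ≤ C * 1 := mul_le_mul (hφC t) h_damp (abs_nonneg _) ((abs_nonneg _).trans (hφC t))
    _ = C := mul_one C

theorem tendsto_mul_min_one_natCast_mul_abs (hφ₀ : φ 0 = 0) (t : ℝ) :
    Tendsto (fun m : ℕ => φ t * min 1 (m * |t|)) atTop (𝓝 (φ t)) := by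
  rcases eq_or_ne t 0 with rfl | ht
  · simp [hφ₀]
  have h_large : ∀ᶠ m : ℕ in atTop, 1 ≤ m * |t| :=
    (tendsto_natCast_atTop_atTop.atTop_mul_const (abs_pos.2 ht)).eventually_ge_atTop 1
  refine tendsto_const_nhds.congr' ?_
  filter_upwards [h_large] with m hm
  rw [min_eq_left hm, mul_one]

theorem exists_continuous_tendsto_tsum_mul_comp_sub (hφ : ∀ t ≠ 0, ContinuousAt φ t)
    (hφC : ∀ t, |φ t| ≤ C) (hφ₀ : φ 0 = 0) {w : ℕ → ℝ} (hw : Summable w) (q : ℕ → ℝ) :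
    ∃ g : ℕ → ℝ → ℝ, (∀ m, Continuous (g m)) ∧
      ∀ x, Tendsto (fun m => g m x) atTop (𝓝 (∑' n, w n * φ (x - q n))) := by
  have h_bound : ∀ (m : ℕ) n x, ‖w n * (φ (x - q n) * min 1 (m * |x - q n|))‖ ≤ |w n| * C :=
    fun m n x => by
      rw [Real.norm_eq_abs, abs_mul]
      exact mul_le_mul_of_nonneg_left
        (abs_mul_min_one_mul_abs_le hφC m.cast_nonneg _) (abs_nonneg _)
  refine ⟨fun m x => ∑' n, w n * (φ (x - q n) * min 1 (m * |x - q n|)), fun m => ?_, fun x => ?_⟩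
  · exact continuous_tsum (fun n => continuous_const.mul
      ((continuous_mul_min_one_mul_abs hφ hφC m).comp (continuous_sub_right (q n))))
      (hw.abs.mul_right C) (h_bound m)
  · exact tendsto_tsum_of_dominated_convergence (hw.abs.mul_right C)
      (fun n => (tendsto_mul_min_one_natCast_mul_abs hφ₀ _).const_mul (w n))
      (.of_forall fun m n => h_bound m n x)

end DampedSeries

theorem hasSum_half_pow_succ : HasSum (fun n : ℕ => (1 / 2 : ℝ) ^ (n + 1)) 1 := by
  simpa only [← pow_succ', one_div, inv_mul_cancel₀ (two_ne_zero' ℝ)] using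
    hasSum_geometric_two.mul_left (1 / 2 : ℝ)

theorem abs_tsum_half_pow_succ_mul_le_one {a : ℕ → ℝ} (ha : ∀ n, |a n| ≤ 1) :
    |∑' n, (1 / 2 : ℝ) ^ (n + 1) * a n| ≤ 1 := by
  rw [← Real.norm_eq_abs]
  refine tsum_of_norm_bounded hasSum_half_pow_succ fun n => ?_
  rw [Real.norm_eq_abs, abs_mul, abs_of_pos (pow_pos one_half_pos (n + 1))]
  exact mul_le_of_le_one_right (by positivity) (ha n)

theorem graph_of_sum_of_sin_h1_retract_general
    (q : ℕ → ℝ)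
    (f : ℝ → ℝ)
    (hf : ∀ x : ℝ, f x =
      ∑' n : ℕ, (1 / 2 : ℝ) ^ (n + 1) * (if x = q n then 0 else Real.sin (1 / (x - q n)))) :
    ∃ r : (Set.Icc (0 : ℝ) 1 ×ˢ Set.Icc (-1 : ℝ) 1 : Set (ℝ × ℝ)) →
        {p : (Set.Icc (0 : ℝ) 1 ×ˢ Set.Icc (-1 : ℝ) 1 : Set (ℝ × ℝ)) |
          (p : ℝ × ℝ).2 = f (p : ℝ × ℝ).1},
      (∀ C : Set {p : (Set.Icc (0 : ℝ) 1 ×ˢ Set.Icc (-1 : ℝ) 1 : Set (ℝ × ℝ)) |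
          (p : ℝ × ℝ).2 = f (p : ℝ × ℝ).1},
        IsClosed C → IsGδ (r ⁻¹' C)) ∧
      ∀ p (hp : p ∈ {p : (Set.Icc (0 : ℝ) 1 ×ˢ Set.Icc (-1 : ℝ) 1 : Set (ℝ × ℝ)) |
          (p : ℝ × ℝ).2 = f (p : ℝ × ℝ).1}),
        (r p : (Set.Icc (0 : ℝ) 1 ×ˢ Set.Icc (-1 : ℝ) 1 : Set (ℝ × ℝ))) = p := by
  have hf' : ∀ x, f x = ∑' n, (1 / 2 : ℝ) ^ (n + 1) * Real.sin (1 / (x - q n)) := fun x => by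
    rw [hf x]
    exact tsum_congr fun n => by split_ifs with h <;> simp [h]
  have hf_mem : ∀ x, f x ∈ Icc (-1 : ℝ) 1 := fun x =>
    abs_le.1 (hf' x ▸ abs_tsum_half_pow_succ_mul_le_one fun _ => Real.abs_sin_le_one _)
  obtain ⟨g, hg_cont, hg_lim⟩ := exists_continuous_tendsto_tsum_mul_comp_sub
    (φ := fun t => Real.sin (1 / t)) (fun t ht => by fun_prop (disch := exact ht))
    (fun t => Real.abs_sin_le_one _) (by simp) hasSum_half_pow_succ.summable q
  refine ⟨fun p => ⟨⟨(p.1.1, f p.1.1), p.2.1, hf_mem _⟩, rfl⟩, fun C hC => ?_,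
    fun _ hp => Subtype.ext (Prod.ext rfl hp.symm)⟩
  obtain ⟨F, hF, rfl⟩ := (IsInducing.subtypeVal.comp IsInducing.subtypeVal).isClosed_iff.1 hC
  refine hF.isGδ_preimage_of_tendsto (g := fun m p => (p.1.1, g m p.1.1)) (fun m => by fun_prop)
    fun p => ?_
  simpa [hf'] using tendsto_const_nhds.prodMk_nhds (hg_lim p.1.1)

theorem graph_of_sum_of_sin_h1_retract
    (q : ℕ → ℝ) (hq_inj : Function.Injective q)
    (hq_range : Set.range q = {x : ℝ | x ∈ Set.Icc (0 : ℝ) 1 ∧ ∃ p : ℚ, (p : ℝ) = x})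
    (f : ℝ → ℝ)
    (hf : ∀ x : ℝ, f x =
      ∑' n : ℕ, (1 / 2 : ℝ) ^ (n + 1) * (if x = q n then 0 else Real.sin (1 / (x - q n)))) :
    ∃ r : (Set.Icc (0 : ℝ) 1 ×ˢ Set.Icc (-1 : ℝ) 1 : Set (ℝ × ℝ)) →
        {p : (Set.Icc (0 : ℝ) 1 ×ˢ Set.Icc (-1 : ℝ) 1 : Set (ℝ × ℝ)) |
          (p : ℝ × ℝ).2 = f (p : ℝ × ℝ).1},
      (∀ C : Set {p : (Set.Icc (0 : ℝ) 1 ×ˢ Set.Icc (-1 : ℝ) 1 : Set (ℝ × ℝ)) |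
          (p : ℝ × ℝ).2 = f (p : ℝ × ℝ).1},
        IsClosed C → IsGδ (r ⁻¹' C)) ∧
      ∀ p (hp : p ∈ {p : (Set.Icc (0 : ℝ) 1 ×ˢ Set.Icc (-1 : ℝ) 1 : Set (ℝ × ℝ)) |
          (p : ℝ × ℝ).2 = f (p : ℝ × ℝ).1}),
        (r p : (Set.Icc (0 : ℝ) 1 ×ˢ Set.Icc (-1 : ℝ) 1 : Set (ℝ × ℝ))) = p :=
  graph_of_sum_of_sin_h1_retract_general q f hf
end
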